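/- Let (a_d)_{d≥1} be any sequence of nonnegative reals with a_d·d^{3/2} → 0 as d → ∞. Then there exists a constant C > 0 such that for all d ≥ 1, the set {x ∈ S^{d-1} : x_i ≤ -a_d for at least one index i} has (d-1)-dimensional Hausdorff measure at least (1 - C/2^d)·ω_{d-1}. -/

import Mathlib

/-!
Let `A` be the set of points of the sphere all of whose coordinates exceed `-a`. Translating by the
diagonal vector `v = (a, …, a)`, of norm `t = a √d`, and projecting radially back onto the sphere
maps `A` into the open positive orthant, with a `(1 - 2t)⁻¹`-Lipschitz inverse. Once `t d ≤ 1/4`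
this costs at most a factor `2` in `(d-1)`-dimensional measure, and the `2^d` coordinate sign
changes show that the orthant carries `2^{-d}` of the measure of the sphere. The sphere has finite
measure (it is covered by Lipschitz images of the faces of a cube), so the complement of `A` keeps
at least `1 - 2^{1-d}` of it; the finitely many remaining `d` are absorbed into `C`.
-/

open MeasureTheory Filter Set
open scoped ENNReal NNReal

namespace NormedSpace

section

variable {V : Type*} [NormedAddCommGroup V] [NormedSpace ℝ V]

lemma normalize_sub_normalize (x y : V) :
    normalize x - normalize y = ‖x‖⁻¹ • (x - y) + (‖x‖⁻¹ - ‖y‖⁻¹) • y := by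
  simp only [NormedSpace.normalize, smul_sub, sub_smul]
  abel

lemma norm_inv_norm_sub_inv_norm_smul {x y : V} (hx : x ≠ 0) (hy : y ≠ 0) :
    ‖(‖x‖⁻¹ - ‖y‖⁻¹) • y‖ = |‖x‖ - ‖y‖| / ‖x‖ := by
  have hx' : 0 < ‖x‖ := norm_pos_iff.mpr hx
  have hy' : 0 < ‖y‖ := norm_pos_iff.mpr hy
  rw [norm_smul, Real.norm_eq_abs, inv_sub_inv hx'.ne' hy'.ne', abs_div,
    abs_of_pos (mul_pos hx' hy'), abs_sub_comm]
  field_simp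

lemma norm_normalize_sub_normalize_le {x y : V} (hx : x ≠ 0) (hy : y ≠ 0) :
    ‖normalize x - normalize y‖ ≤ (‖x - y‖ + |‖x‖ - ‖y‖|) / ‖x‖ := by
  have hx' : 0 < ‖x‖ := norm_pos_iff.mpr hx
  calc ‖normalize x - normalize y‖
      ≤ ‖‖x‖⁻¹ • (x - y)‖ + ‖(‖x‖⁻¹ - ‖y‖⁻¹) • y‖ := by
        rw [normalize_sub_normalize]; exact norm_add_le _ _
    _ = (‖x - y‖ + |‖x‖ - ‖y‖|) / ‖x‖ := by
        rw [norm_inv_norm_sub_inv_norm_smul hx hy, norm_smul, norm_inv, norm_norm]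
        field_simp

lemma le_norm_normalize_sub_normalize {x y : V} (hx : x ≠ 0) (hy : y ≠ 0) :
    (‖x - y‖ - |‖x‖ - ‖y‖|) / ‖x‖ ≤ ‖normalize x - normalize y‖ := by
  have hx' : 0 < ‖x‖ := norm_pos_iff.mpr hx
  calc (‖x - y‖ - |‖x‖ - ‖y‖|) / ‖x‖
      = ‖‖x‖⁻¹ • (x - y)‖ - ‖(‖x‖⁻¹ - ‖y‖⁻¹) • y‖ := by
        rw [norm_inv_norm_sub_inv_norm_smul hx hy, norm_smul, norm_inv, norm_norm]
        field_simp
    _ ≤ ‖normalize x - normalize y‖ := by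
        rw [normalize_sub_normalize]; exact norm_sub_le_norm_add _ _

lemma lipschitzOnWith_normalize : LipschitzOnWith 2 (normalize : V → V) {x | 1 ≤ ‖x‖} := by
  refine LipschitzOnWith.of_dist_le_mul fun x (hx : 1 ≤ ‖x‖) y (hy : 1 ≤ ‖y‖) => ?_
  have hx0 : x ≠ 0 := norm_pos_iff.mp (one_pos.trans_le hx)
  have hy0 : y ≠ 0 := norm_pos_iff.mp (one_pos.trans_le hy)
  rw [dist_eq_norm, dist_eq_norm, NNReal.coe_ofNat]
  calc ‖normalize x - normalize y‖ ≤ (‖x - y‖ + |‖x‖ - ‖y‖|) / ‖x‖ :=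
        norm_normalize_sub_normalize_le hx0 hy0
    _ ≤ ‖x - y‖ + |‖x‖ - ‖y‖| :=
        div_le_self (by positivity) hx
    _ ≤ 2 * ‖x - y‖ := by linarith [abs_norm_sub_norm_le x y]

end

section

variable {F : Type*} [NormedAddCommGroup F] [InnerProductSpace ℝ F]

lemma abs_norm_add_sub_norm_add_mul_le {x y : F} (hxy : ‖x‖ = ‖y‖) (v : F) :
    |‖x + v‖ - ‖y + v‖| * (‖x + v‖ + ‖y + v‖) ≤ 2 * (‖x - y‖ * ‖v‖) := by
  have hsq : ‖x + v‖ ^ 2 - ‖y + v‖ ^ 2 = 2 * inner ℝ (x - y) v := by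
    rw [norm_add_sq_real, norm_add_sq_real, hxy, inner_sub_left]
    ring
  calc |‖x + v‖ - ‖y + v‖| * (‖x + v‖ + ‖y + v‖)
      = |‖x + v‖ ^ 2 - ‖y + v‖ ^ 2| := by
        rw [← abs_of_nonneg (by positivity : 0 ≤ ‖x + v‖ + ‖y + v‖), ← abs_mul]
        ring_nf
    _ ≤ 2 * (‖x - y‖ * ‖v‖) := by
        rw [hsq, abs_mul, abs_two]
        gcongr
        exact abs_real_inner_le_norm _ _

lemma mul_norm_sub_le_norm_normalize_add_sub {x y v : F} (hx : ‖x‖ = 1) (hy : ‖y‖ = 1)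
    (hv : ‖v‖ ≤ 1 / 2) :
    (1 - 2 * ‖v‖) * ‖x - y‖ ≤ ‖normalize (x + v) - normalize (y + v)‖ := by
  set t := ‖v‖
  set δ := |‖x + v‖ - ‖y + v‖|
  have ht : 0 ≤ t := norm_nonneg v
  have hD : 0 ≤ ‖x - y‖ := norm_nonneg _
  have hXl : 1 - t ≤ ‖x + v‖ := by
    have := norm_sub_norm_le x (-v); rw [sub_neg_eq_add, norm_neg] at this; linarith
  have hYl : 1 - t ≤ ‖y + v‖ := by
    have := norm_sub_norm_le y (-v); rw [sub_neg_eq_add, norm_neg] at this; linarith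
  have hXu : ‖x + v‖ ≤ 1 + t := hx ▸ norm_add_le x v
  have hδ : δ * (1 - t) ≤ ‖x - y‖ * t := by
    have := abs_norm_add_sub_norm_add_mul_le (hx.trans hy.symm) v
    nlinarith [mul_le_mul_of_nonneg_left (add_le_add hXl hYl) (abs_nonneg (‖x + v‖ - ‖y + v‖))]
  -- `t / (1 - t) ≤ t + 2 t²` because `t ≤ 1 / 2`
  have hδ' : δ ≤ ‖x - y‖ * (t + 2 * t ^ 2) := by
    nlinarith [mul_nonneg hD (mul_nonneg (sq_nonneg t) (by linarith : 0 ≤ 1 - 2 * t))]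
  have key := le_norm_normalize_sub_normalize (norm_pos_iff.mp (by linarith) : x + v ≠ 0)
    (norm_pos_iff.mp (by linarith) : y + v ≠ 0)
  rw [show (x + v) - (y + v) = x - y by abel] at key
  refine le_trans ?_ key
  rw [le_div_iff₀ (by linarith)]
  nlinarith [mul_le_mul_of_nonneg_left hXu (mul_nonneg (by linarith : 0 ≤ 1 - 2 * t) hD)]

end

end NormedSpace

/-- The radial projection onto the unit sphere of the face `x j = c` of the cube `[-1, 1]^(n+1)`,
parametrized by the remaining coordinates. -/
noncomputable def sphereChart {n : ℕ} (j : Fin (n + 1)) (c : ℝ) (u : Fin n → ℝ) :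
    EuclideanSpace ℝ (Fin (n + 1)) :=
  NormedSpace.normalize (WithLp.toLp 2 (Fin.insertNth (α := fun _ => ℝ) j c u))

lemma exists_lipschitzWith_sphereChart {n : ℕ} (j : Fin (n + 1)) {c : ℝ} (hc : 1 ≤ |c|) :
    ∃ K, LipschitzWith K (sphereChart j c) := by
  have hins : LipschitzWith 1 (Fin.insertNth (α := fun _ => ℝ) j c) :=
    LipschitzWith.of_dist_le_mul fun u w => by simp [Fin.dist_insertNth_insertNth]
  have hface : LipschitzWith _ fun u => WithLp.toLp 2 (Fin.insertNth (α := fun _ => ℝ) j c u) :=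
    (PiLp.lipschitzWith_toLp 2 _).comp hins
  have hout : MapsTo (fun u => WithLp.toLp 2 (Fin.insertNth (α := fun _ => ℝ) j c u)) univ
      {x | 1 ≤ ‖x‖} := fun u _ => by
    have := PiLp.norm_apply_le (WithLp.toLp 2 (Fin.insertNth (α := fun _ => ℝ) j c u)) j
    simp only [Fin.insertNth_apply_same, Real.norm_eq_abs] at this
    exact hc.trans this
  exact ⟨_, lipschitzOnWith_univ.mp
    (NormedSpace.lipschitzOnWith_normalize.comp hface.lipschitzOnWith hout)⟩

lemma sphere_subset_iUnion_image_sphereChart (n : ℕ) :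
    Metric.sphere (0 : EuclideanSpace ℝ (Fin (n + 1))) 1 ⊆
      ⋃ p : Fin (n + 1) × ℤˣ, sphereChart p.1 (p.2 : ℤ) '' Metric.closedBall 0 1 := by
  intro x hx
  have hx1 : ‖x‖ = 1 := mem_sphere_zero_iff_norm.mp hx
  obtain ⟨j, hj⟩ := Finite.exists_max fun i => |x i|
  set m := |x j|
  have hm : 0 < m := by
    refine (abs_nonneg _).lt_of_ne fun hm => ?_
    have : x = 0 := by
      ext i; exact abs_nonpos_iff.mp ((hj i).trans hm.ge)
    simp [this] at hx1
  set s : ℤˣ := if 0 ≤ x j then 1 else -1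
  have hs : ((s : ℤ) : ℝ) * m = x j := by
    by_cases h : 0 ≤ x j
    · simp [s, h, m, abs_of_nonneg h]
    · simp [s, h, m, abs_of_neg (not_le.mp h)]
  refine mem_iUnion.mpr ⟨(j, s), fun i => x (j.succAbove i) / m, ?_, ?_⟩
  · rw [Metric.mem_closedBall, dist_zero_right, pi_norm_le_iff_of_nonneg zero_le_one]
    intro i
    rw [Real.norm_eq_abs, abs_div, abs_of_pos hm, div_le_one hm]
    exact hj _
  · have hface : WithLp.toLp 2 (Fin.insertNth (α := fun _ => ℝ) j ((s : ℤ) : ℝ)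
        fun i => x (j.succAbove i) / m) = m⁻¹ • x := by
      ext i
      refine Fin.succAboveCases j ?_ (fun k => ?_) i
      · simp only [Fin.insertNth_apply_same, PiLp.smul_apply, smul_eq_mul, ← hs]
        field_simp
      · simp [div_eq_inv_mul]
    simp only [sphereChart, hface, NormedSpace.normalize_smul_of_pos (inv_pos.mpr hm),
      NormedSpace.normalize_eq_self_of_norm_eq_one hx1]

lemma hausdorffMeasure_sphere_lt_top (n : ℕ) :
    μH[n] (Metric.sphere (0 : EuclideanSpace ℝ (Fin (n + 1))) 1) < ⊤ := by
  have hball : μH[n] (Metric.closedBall (0 : Fin n → ℝ) 1) < ⊤ := by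
    rw [show (n : ℝ) = (Fintype.card (Fin n) : ℕ) by simp, hausdorffMeasure_pi_real]
    exact measure_closedBall_lt_top
  refine (measure_mono (sphere_subset_iUnion_image_sphereChart n)).trans_lt
    ((measure_iUnion_le _).trans_lt ?_)
  rw [tsum_fintype]
  refine ENNReal.sum_lt_top.mpr fun p _ => ?_
  obtain ⟨K, hK⟩ := exists_lipschitzWith_sphereChart p.1 (c := ((p.2 : ℤ) : ℝ)) (by
    rcases Int.units_eq_one_or p.2 with h | h <;> simp [h])
  exact (hK.hausdorffMeasure_image_le n.cast_nonneg _).trans_lt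
    (ENNReal.mul_lt_top (ENNReal.rpow_lt_top_of_nonneg n.cast_nonneg ENNReal.coe_ne_top) hball)

lemma hausdorffMeasure_le_mul_hausdorffMeasure_image {X Y : Type*} [MetricSpace X]
    [MeasurableSpace X] [BorelSpace X] [MetricSpace Y] [MeasurableSpace Y] [BorelSpace Y]
    {f : X → Y} {s : Set X} {K : ℝ≥0} (hf : ∀ x ∈ s, ∀ y ∈ s, dist x y ≤ K * dist (f x) (f y))
    {r : ℝ} (hr : 0 ≤ r) :
    μH[r] s ≤ (K : ℝ≥0∞) ^ r * μH[r] (f '' s) := by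
  have hanti : AntilipschitzWith K (f ∘ ((↑) : s → X)) :=
    AntilipschitzWith.of_le_mul_dist fun x y => hf x x.2 y y.2
  calc μH[r] s = μH[r] (univ : Set s) := by
        rw [← (isometry_subtype_coe (s := s)).hausdorffMeasure_image (Or.inl hr), image_univ,
          Subtype.range_coe]
    _ ≤ (K : ℝ≥0∞) ^ r * μH[r] ((f ∘ ((↑) : s → X)) '' univ) :=
        hanti.le_hausdorffMeasure_image hr univ
    _ = (K : ℝ≥0∞) ^ r * μH[r] (f '' s) := by rw [image_univ, range_comp, Subtype.range_coe]

section SignFlip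

variable {ι : Type*} [Fintype ι] [DecidableEq ι]

noncomputable def signFlip (s : Finset ι) : EuclideanSpace ℝ ι ≃ₗᵢ[ℝ] EuclideanSpace ℝ ι :=
  LinearIsometryEquiv.piLpCongrRight 2 fun i =>
    if i ∈ s then LinearIsometryEquiv.neg ℝ else LinearIsometryEquiv.refl ℝ ℝ

lemma signFlip_apply (s : Finset ι) (x : EuclideanSpace ℝ ι) (i : ι) :
    signFlip s x i = if i ∈ s then -x i else x i := by
  by_cases h : i ∈ s <;> simp [signFlip, h]

lemma hausdorffMeasure_iUnion_signFlip_image {P : Set (EuclideanSpace ℝ ι)} (hPm : MeasurableSet P)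
    (hpos : ∀ x ∈ P, ∀ i, 0 < x i) (r : ℝ) :
    μH[r] (⋃ s : Finset ι, signFlip s '' P) = 2 ^ Fintype.card ι * μH[r] P := by
  have hmeas : ∀ s : Finset ι, MeasurableSet (signFlip s '' P) := fun s =>
    (signFlip s).toHomeomorph.toMeasurableEquiv.measurableSet_image.mpr hPm
  have hdisj : Pairwise (Function.onFun Disjoint fun s : Finset ι => signFlip s '' P) := by
    intro s t hst
    obtain ⟨i, hi⟩ : ∃ i, ¬(i ∈ s ↔ i ∈ t) := by
      by_contra! h; exact hst (Finset.ext h)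
    refine Set.disjoint_left.mpr ?_
    rintro _ ⟨x, hx, rfl⟩ ⟨y, hy, hxy⟩
    have key : signFlip t y i = signFlip s x i := congrArg (· i) hxy
    have hx := hpos x hx i
    have hy := hpos y hy i
    rw [signFlip_apply, signFlip_apply] at key
    split_ifs at key <;> first | tauto | linarith
  have hiso : ∀ s : Finset ι, μH[r] (signFlip s '' P) = μH[r] P := fun s =>
    (signFlip s).isometry.hausdorffMeasure_image (Or.inr (signFlip s).surjective) P
  rw [measure_iUnion hdisj hmeas, tsum_fintype]
  simp [hiso, Fintype.card_finset]

end SignFlip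

lemma two_pow_card_mul_hausdorffMeasure_sphere_orthant_le {ι : Type*} [Fintype ι] (r : ℝ) :
    2 ^ Fintype.card ι *
        μH[r] {x ∈ Metric.sphere (0 : EuclideanSpace ℝ ι) 1 | ∀ i, 0 < x i} ≤
      μH[r] (Metric.sphere (0 : EuclideanSpace ℝ ι) 1) := by
  classical
  have hQ : MeasurableSet {x ∈ Metric.sphere (0 : EuclideanSpace ℝ ι) 1 | ∀ i, 0 < x i} := by
    measurability
  rw [← hausdorffMeasure_iUnion_signFlip_image hQ (fun x hx => hx.2) r]
  refine measure_mono (iUnion_subset fun s => ?_)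
  rintro _ ⟨x, hx, rfl⟩
  simpa using hx.1

lemma inv_one_sub_two_mul_pow_le_two {t : ℝ} {m : ℕ} (ht : 4 * t ≤ 1)
    (htm : 4 * t * m ≤ 1) : (1 - 2 * t)⁻¹ ^ m ≤ 2 := by
  have hbern : 1 + m * (-(2 * t)) ≤ (1 - 2 * t) ^ m := by
    simpa [sub_eq_add_neg] using one_add_mul_le_pow (by linarith : (-2 : ℝ) ≤ -(2 * t)) m
  rw [inv_pow, inv_le_comm₀ (pow_pos (by linarith) m) two_pos]
  linarith

lemma hausdorffMeasure_sphere_forall_neg_lt_le {ι : Type*} [Fintype ι] [Nonempty ι] {a : ℝ}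
    (ha : 0 ≤ a) (hsmall : 4 * (a * √(Fintype.card ι)) * Fintype.card ι ≤ 1) :
    μH[Fintype.card ι - 1] {x ∈ Metric.sphere (0 : EuclideanSpace ℝ ι) 1 | ∀ i, -a < x i} ≤
      2 * μH[Fintype.card ι - 1] {x ∈ Metric.sphere (0 : EuclideanSpace ℝ ι) 1 | ∀ i, 0 < x i} := by
  set d := Fintype.card ι
  have hd : 1 ≤ d := Fintype.card_pos
  set v : EuclideanSpace ℝ ι := WithLp.toLp 2 fun _ => a
  have hv : ‖v‖ = a * √d := by
    simp [v, EuclideanSpace.norm_eq, Real.sqrt_sq ha, mul_comm, d]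
  set t := ‖v‖
  have ht : 4 * t ≤ 1 := by
    nlinarith [norm_nonneg v, (Nat.one_le_cast (α := ℝ)).mpr hd]
  set ψ : EuclideanSpace ℝ ι → EuclideanSpace ℝ ι := fun x => NormedSpace.normalize (x + v)
  set A := {x ∈ Metric.sphere (0 : EuclideanSpace ℝ ι) 1 | ∀ i, -a < x i}
  have hψ : MapsTo ψ A {x ∈ Metric.sphere (0 : EuclideanSpace ℝ ι) 1 | ∀ i, 0 < x i} := by
    rintro x ⟨-, hx⟩
    have hpos : ∀ i, 0 < (x + v) i := fun i => by simp [v]; linarith [hx i]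
    have hne : x + v ≠ 0 := fun h => by simpa [h] using hpos (Classical.arbitrary ι)
    refine ⟨mem_sphere_zero_iff_norm.mpr (NormedSpace.norm_normalize hne), fun i => ?_⟩
    exact mul_pos (inv_pos.mpr (norm_pos_iff.mpr hne)) (hpos i)
  have hexp : ∀ x ∈ A, ∀ y ∈ A, dist x y ≤ ((1 - 2 * t)⁻¹).toNNReal * dist (ψ x) (ψ y) := by
    rintro x ⟨hx, -⟩ y ⟨hy, -⟩
    rw [Real.coe_toNNReal _ (by simp; linarith), dist_eq_norm, dist_eq_norm,
      inv_mul_eq_div, le_div_iff₀' (by linarith)]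
    exact NormedSpace.mul_norm_sub_le_norm_normalize_add_sub (mem_sphere_zero_iff_norm.mp hx)
      (mem_sphere_zero_iff_norm.mp hy) (by linarith)
  calc μH[d - 1] A ≤ ENNReal.ofReal (1 - 2 * t)⁻¹ ^ ((d : ℝ) - 1) * μH[d - 1] (ψ '' A) :=
        hausdorffMeasure_le_mul_hausdorffMeasure_image hexp (by simpa using hd)
    _ ≤ 2 * μH[d - 1] {x ∈ Metric.sphere (0 : EuclideanSpace ℝ ι) 1 | ∀ i, 0 < x i} := by
        gcongr
        · rw [← Nat.cast_pred hd, ENNReal.rpow_natCast,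
            ← ENNReal.ofReal_pow (inv_nonneg.mpr (by linarith)), ← ENNReal.ofReal_ofNat 2]
          refine ENNReal.ofReal_le_ofReal (inv_one_sub_two_mul_pow_le_two ht ?_)
          calc 4 * t * (d - 1 : ℕ) ≤ 4 * t * d := by gcongr; exact Nat.pred_le d
            _ ≤ 1 := hv ▸ hsmall
        · exact hψ.image_subset

lemma ofReal_one_sub_mul_le_of_le_add {c : ℝ} (hc : 0 ≤ c) {S T A : ℝ≥0∞} (hS : S ≠ ⊤)
    (hST : S ≤ T + A) (hA : A ≤ ENNReal.ofReal c * S) : ENNReal.ofReal (1 - c) * S ≤ T := by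
  rw [ENNReal.ofReal_sub 1 hc, ENNReal.ofReal_one, ENNReal.sub_mul fun _ _ => hS, one_mul]
  exact tsub_le_iff_right.mpr (hST.trans (by gcongr))

lemma ofReal_one_sub_mul_hausdorffMeasure_sphere_le {d : ℕ} (hd : 1 ≤ d) {a : ℝ} (ha : 0 ≤ a)
    (hsmall : 4 * (a * √d) * d ≤ 1) :
    ENNReal.ofReal (1 - 2 / 2 ^ d) *
        μH[(d : ℝ) - 1] (Metric.sphere (0 : EuclideanSpace ℝ (Fin d)) 1) ≤
      μH[(d : ℝ) - 1] {x ∈ Metric.sphere (0 : EuclideanSpace ℝ (Fin d)) 1 | ∃ i, x i ≤ -a} := by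
  have : Nonempty (Fin d) := ⟨⟨0, hd⟩⟩
  set S := Metric.sphere (0 : EuclideanSpace ℝ (Fin d)) 1
  set Q := {x ∈ S | ∀ i, 0 < x i}
  have hS : μH[(d : ℝ) - 1] S ≠ ⊤ := by
    obtain ⟨n, rfl⟩ : ∃ n, d = n + 1 := ⟨d - 1, by omega⟩
    simpa using (hausdorffMeasure_sphere_lt_top n).ne
  have hcover : S ⊆ {x ∈ S | ∃ i, x i ≤ -a} ∪ {x ∈ S | ∀ i, -a < x i} := fun x hx => by
    by_cases h : ∃ i, x i ≤ -a
    · exact Or.inl ⟨hx, h⟩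
    · simp only [not_exists, not_le] at h
      exact Or.inr ⟨hx, h⟩
  have horth : 2 ^ d * μH[(d : ℝ) - 1] Q ≤ μH[(d : ℝ) - 1] S := by
    simpa only [Fintype.card_fin] using
      two_pow_card_mul_hausdorffMeasure_sphere_orthant_le (ι := Fin d) ((d : ℝ) - 1)
  refine ofReal_one_sub_mul_le_of_le_add (by positivity) hS
    ((measure_mono hcover).trans (measure_union_le _ _)) ?_
  calc μH[(d : ℝ) - 1] {x ∈ S | ∀ i, -a < x i} ≤ 2 * μH[(d : ℝ) - 1] Q := by
        simpa only [Fintype.card_fin] using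
          hausdorffMeasure_sphere_forall_neg_lt_le (ι := Fin d) ha (by simpa using hsmall)
    _ = ENNReal.ofReal (2 / 2 ^ d) * (2 ^ d * μH[(d : ℝ) - 1] Q) := by
        rw [← mul_assoc, ENNReal.ofReal_div_of_pos (by positivity), ENNReal.ofReal_ofNat,
          ENNReal.ofReal_pow zero_le_two, ENNReal.ofReal_ofNat,
          ENNReal.div_mul_cancel (by simp) (by simp)]
    _ ≤ ENNReal.ofReal (2 / 2 ^ d) * μH[(d : ℝ) - 1] S := by gcongr

/-- if `a_d ≥ 0` and `a_d · d^{3/2} → 0`, then there is `C > 0` such that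
for all `d ≥ 1`, the set of points of the unit sphere of `ℝ^d` having at least one
coordinate `≤ -a_d` has `(d-1)`-dimensional Hausdorff measure at least
`(1 - C/2^d)·ω_{d-1}`. -/
theorem complement_sigma_volume_lower_bound (a : ℕ → ℝ) (ha : ∀ d, 0 ≤ a d)
    (hlim : Tendsto (fun d : ℕ => a d * (d : ℝ) ^ ((3 : ℝ) / 2)) atTop (nhds 0)) :
    ∃ C : ℝ, 0 < C ∧ ∀ d : ℕ, 1 ≤ d →
      ENNReal.ofReal (1 - C / 2 ^ d) *
          μH[(d : ℝ) - 1] (Metric.sphere (0 : EuclideanSpace ℝ (Fin d)) 1) ≤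
        μH[(d : ℝ) - 1]
          {x : EuclideanSpace ℝ (Fin d) |
            x ∈ Metric.sphere (0 : EuclideanSpace ℝ (Fin d)) 1 ∧
              ∃ i : Fin d, x i ≤ -(a d)} := by
  obtain ⟨D, hD⟩ :=
    eventually_atTop.mp (hlim.eventually (ge_mem_nhds (by norm_num : (0 : ℝ) < 1 / 4)))
  refine ⟨2 ^ (D + 1), by positivity, fun d hd => ?_⟩
  rcases lt_or_ge d D with hdD | hdD
  · have : 1 - 2 ^ (D + 1) / 2 ^ d ≤ (0 : ℝ) := by
      rw [sub_nonpos, one_le_div (by positivity)]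
      exact pow_le_pow_right₀ (one_le_two : (1 : ℝ) ≤ 2) (by omega)
    simp [ENNReal.ofReal_of_nonpos this]
  · have hsmall : 4 * (a d * √d) * d ≤ 1 := by
      have h32 : (d : ℝ) ^ ((3 : ℝ) / 2) = √d * d := by
        rw [Real.rpow_div_two_eq_sqrt _ d.cast_nonneg, show (3 : ℝ) = (2 : ℕ) + 1 by norm_num,
          Real.rpow_add_one (by positivity), Real.rpow_natCast, Real.sq_sqrt d.cast_nonneg,
          mul_comm]
      have := hD d hdD
      rw [h32] at this
      linarith
    refine le_trans ?_ (ofReal_one_sub_mul_hausdorffMeasure_sphere_le hd (ha d) hsmall)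
    gcongr
    exact le_self_pow₀ one_le_two D.succ_ne_zero
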